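/- arXiv:2206.07886 — 3 statements merged into one kernel-verified Lean document; each statement's English description precedes it below -/
import Mathlib

section
/- For any matrices A ∈ ℝ^{n×d}, S ∈ ℝ^{m×n}, and any matrix Z ∈ ℝ^{n×m} (giving a rank-≤k candidate ZVᵀ where Vᵀ is an orthonormal basis for the row space of SA), the best rank-k approximation of A whose rows lie in the row space of SA is attained by [A(SA)†(SA)]_k, i.e., ‖A − [A(SA)†(SA)]_k‖_F ≤ ‖A − ZVᵀ‖_F for every rank-k matrix Z. -/
open Matrix

noncomputable def frobSq {m n : Type*} [Fintype m] [Fintype n] (A : Matrix m n ℝ) : ℝ :=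
  ∑ i, ∑ j, (A i j) ^ 2

def IsMoorePenrose {m n : Type*} [Fintype m] [Fintype n]
    (A : Matrix m n ℝ) (B : Matrix n m ℝ) : Prop :=
  A * B * A = A ∧ B * A * B = B ∧ (A * B)ᵀ = A * B ∧ (B * A)ᵀ = B * A

def IsBestRankApprox {m n : Type*} [Fintype m] [Fintype n] (k : ℕ)
    (A M : Matrix m n ℝ) : Prop :=
  M.rank ≤ k ∧ ∀ N : Matrix m n ℝ, N.rank ≤ k → frobSq (A - M) ≤ frobSq (A - N)

lemma frobSq_nonneg {m n : Type*} [Fintype m] [Fintype n] (A : Matrix m n ℝ) :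
    0 ≤ frobSq A := by
  apply Finset.sum_nonneg; intro i _
  apply Finset.sum_nonneg; intro j _
  positivity

lemma frobSq_eq_zero {m n : Type*} [Fintype m] [Fintype n] {A : Matrix m n ℝ}
    (h : frobSq A = 0) : A = 0 := by
  ext i j
  have h1 : ∀ i ∈ Finset.univ, (0:ℝ) ≤ ∑ j, (A i j)^2 := by
    intro i _; apply Finset.sum_nonneg; intro j _; positivity
  have h2 := (Finset.sum_eq_zero_iff_of_nonneg h1).mp h i (Finset.mem_univ i)
  have h3 : ∀ j ∈ Finset.univ, (0:ℝ) ≤ (A i j)^2 := by intro j _; positivity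
  have := (Finset.sum_eq_zero_iff_of_nonneg h3).mp h2 j (Finset.mem_univ j)
  simpa using sq_eq_zero_iff.mp this

lemma frobSq_eq_trace {m n : Type*} [Fintype m] [Fintype n] (A : Matrix m n ℝ) :
    frobSq A = (A * Aᵀ).trace := by
  simp [frobSq, Matrix.trace, Matrix.mul_apply, Matrix.diag, sq]

lemma frobSq_add {m n : Type*} [Fintype m] [Fintype n] (Y W : Matrix m n ℝ)
    (h1 : Y * Wᵀ = 0) (h2 : W * Yᵀ = 0) :
    frobSq (Y + W) = frobSq Y + frobSq W := by
  rw [frobSq_eq_trace, frobSq_eq_trace, frobSq_eq_trace, transpose_add]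
  simp [Matrix.add_mul, Matrix.mul_add, h1, h2]

lemma pyth {m n : Type*} [Fintype m] [Fintype n]
    (P : Matrix n n ℝ) (hPs : Pᵀ = P) (hP2 : P * P = P) (Y : Matrix m n ℝ) :
    frobSq Y = frobSq (Y * P) + frobSq (Y - Y * P) := by
  have e : P * (P * Yᵀ) = P * Yᵀ := by rw [← Matrix.mul_assoc, hP2]
  have h1 : (Y * P) * (Y - Y * P)ᵀ = 0 := by
    rw [transpose_sub, Matrix.mul_sub, transpose_mul, hPs, Matrix.mul_assoc,
      Matrix.mul_assoc, e, sub_self]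
  have h2 : (Y - Y * P) * (Y * P)ᵀ = 0 := by
    rw [transpose_mul, hPs, Matrix.sub_mul, Matrix.mul_assoc, e, sub_self]
  have := frobSq_add (Y * P) (Y - Y * P) h1 h2
  rw [← this]
  congr 1
  abel

/-- The best rank-k approximation of `A` whose rows lie in the row space of `SA`
is attained by `[A(SA)†(SA)]ₖ`: for every rank-≤k matrix `Z`,
`‖A − [A(SA)†(SA)]ₖ‖_F ≤ ‖A − ZVᵀ‖_F`, where `Vᵀ` is an orthonormal basis of the
row space of `SA`, i.e. `VVᵀ = (SA)†(SA)`. -/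
theorem stmt1 {n d m p k : ℕ}
    (A : Matrix (Fin n) (Fin d) ℝ) (S : Matrix (Fin m) (Fin n) ℝ)
    (G : Matrix (Fin d) (Fin m) ℝ) (hG : IsMoorePenrose (S * A) G)
    (V : Matrix (Fin d) (Fin p) ℝ)
    (hVorth : Vᵀ * V = 1)
    (hVproj : V * Vᵀ = G * (S * A))
    (M : Matrix (Fin n) (Fin d) ℝ)
    (hM : IsBestRankApprox k (A * (G * (S * A))) M)
    (Z : Matrix (Fin n) (Fin p) ℝ) (hZ : Z.rank ≤ k) :
    frobSq (A - M) ≤ frobSq (A - Z * Vᵀ) := by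
  set P : Matrix (Fin d) (Fin d) ℝ := V * Vᵀ with hP
  have hPs : Pᵀ = P := by rw [hP, transpose_mul, transpose_transpose]
  have hP2 : P * P = P := by
    rw [hP, Matrix.mul_assoc, ← Matrix.mul_assoc Vᵀ V Vᵀ, hVorth, Matrix.one_mul]
  have hMopt : ∀ N : Matrix (Fin n) (Fin d) ℝ, N.rank ≤ k →
      frobSq (A * P - M) ≤ frobSq (A * P - N) := by
    intro N hN
    have := hM.2 N hN
    rwa [← hVproj] at this
  have hZV : (Z * Vᵀ) * P = Z * Vᵀ := by
    rw [hP, ← Matrix.mul_assoc, Matrix.mul_assoc Z Vᵀ V, hVorth, Matrix.mul_one]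
  have hZVrank : (Z * Vᵀ).rank ≤ k := le_trans (Matrix.rank_mul_le_left Z Vᵀ) hZ
  -- show M * P = M
  have hMP : M * P = M := by
    have hr : (M * P).rank ≤ k := le_trans (Matrix.rank_mul_le_left M P) hM.1
    have h1 : frobSq (A * P - M) ≤ frobSq (A * P - M * P) := hMopt _ hr
    have h2 : (A * P - M) * P = A * P - M * P := by
      rw [Matrix.sub_mul, Matrix.mul_assoc, hP2]
    have h3 := pyth P hPs hP2 (A * P - M)
    rw [h2] at h3
    have h4 : frobSq ((A * P - M) - (A * P - M * P)) = 0 := by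
      have := frobSq_nonneg ((A * P - M) - (A * P - M * P))
      linarith
    have h5 := frobSq_eq_zero h4
    have h6 : (A * P - M) - (A * P - M * P) = M * P - M := by abel
    rw [h6] at h5
    exact sub_eq_zero.mp h5
  -- Pythagorean decompositions
  have eM : frobSq (A - M) = frobSq (A * P - M) + frobSq (A - A * P) := by
    have := pyth P hPs hP2 (A - M)
    rw [Matrix.sub_mul, hMP] at this
    rw [this]
    congr 1
    abel
  have eZ : frobSq (A - Z * Vᵀ) = frobSq (A * P - Z * Vᵀ) + frobSq (A - A * P) := by
    have := pyth P hPs hP2 (A - Z * Vᵀ)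
    rw [Matrix.sub_mul, hZV] at this
    rw [this]
    congr 1
    abel
  have := hMopt (Z * Vᵀ) hZVrank
  linarith
end

section
/- Let S ∈ ℝ^{m×n} and A ∈ ℝ^{n×d}. The row space of A(SA)†(SA) equals the row space of SA. Consequently, (SA)†(SA) = VVᵀ where Vᵀ contains the right singular vectors of A(SA)†(SA). -/
open Matrix

/-- The row space (span of the rows) of a matrix. -/
def rowSpace {m n : Type*} (A : Matrix m n ℝ) : Submodule ℝ (n → ℝ) :=
  Submodule.span ℝ (Set.range fun i => A i)

lemma row_mul_eq_sum {a b c : ℕ} (C : Matrix (Fin a) (Fin b) ℝ)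
    (N : Matrix (Fin b) (Fin c) ℝ) (i : Fin a) :
    (C * N) i = ∑ j, C i j • N j := by
  funext k
  simp [Matrix.mul_apply, Finset.sum_apply]

lemma rowSpace_mul_le {a b c : ℕ} (C : Matrix (Fin a) (Fin b) ℝ)
    (N : Matrix (Fin b) (Fin c) ℝ) :
    rowSpace (C * N) ≤ rowSpace N := by
  rw [rowSpace, Submodule.span_le]
  rintro _ ⟨i, rfl⟩
  show (C * N) i ∈ Submodule.span ℝ _
  rw [row_mul_eq_sum]
  exact Submodule.sum_mem _ fun j _ =>
    Submodule.smul_mem _ _ (Submodule.subset_span ⟨j, rfl⟩)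

lemma exists_factor {a b c : ℕ} (M : Matrix (Fin a) (Fin c) ℝ)
    (N : Matrix (Fin b) (Fin c) ℝ) (h : rowSpace M ≤ rowSpace N) :
    ∃ C : Matrix (Fin a) (Fin b) ℝ, M = C * N := by
  have hrow : ∀ i, M i ∈ rowSpace N := fun i =>
    h (Submodule.subset_span ⟨i, rfl⟩)
  have hc : ∀ i, ∃ c : Fin b → ℝ, ∑ j, c j • N j = M i := by
    intro i
    exact (Submodule.mem_span_range_iff_exists_fun ℝ).mp (hrow i)
  choose C hC using hc
  refine ⟨Matrix.of C, ?_⟩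
  funext i k
  have := congrFun (hC i) k
  simpa [Matrix.mul_apply, Finset.sum_apply] using this.symm

/-- The row space of `A(SA)†(SA)` equals the row space of `SA`; consequently,
`(SA)†(SA) = VVᵀ` for any `V` whose columns (the rows of `Vᵀ`) form an orthonormal
basis of that row space. -/
theorem stmt2 {n d m : ℕ}
    (A : Matrix (Fin n) (Fin d) ℝ) (S : Matrix (Fin m) (Fin n) ℝ)
    (G : Matrix (Fin d) (Fin m) ℝ) (hG : IsMoorePenrose (S * A) G) :
    rowSpace (A * (G * (S * A))) = rowSpace (S * A) ∧
    ∀ (p : ℕ) (V : Matrix (Fin d) (Fin p) ℝ),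
      Vᵀ * V = 1 → rowSpace Vᵀ = rowSpace (S * A) →
      G * (S * A) = V * Vᵀ := by
  obtain ⟨h1, h2, h3, h4⟩ := hG
  constructor
  · apply le_antisymm
    · rw [← Matrix.mul_assoc]
      exact rowSpace_mul_le _ _
    · have : S * (A * (G * (S * A))) = S * A := by
        simp only [← Matrix.mul_assoc] at h1 ⊢
        exact h1
      calc rowSpace (S * A) = rowSpace (S * (A * (G * (S * A)))) := by rw [this]
        _ ≤ rowSpace (A * (G * (S * A))) := rowSpace_mul_le _ _
  · intro p V hV hr
    obtain ⟨C, hC⟩ := exists_factor Vᵀ (S * A) hr.le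
    obtain ⟨D, hD⟩ := exists_factor (S * A) Vᵀ hr.ge
    have hVP : Vᵀ * (G * (S * A)) = Vᵀ := by
      rw [hC, Matrix.mul_assoc, ← Matrix.mul_assoc (S * A) G (S * A), h1]
    have hVVP : V * Vᵀ * (G * (S * A)) = V * Vᵀ := by
      rw [Matrix.mul_assoc, hVP]
    have hPVV : G * (S * A) * (V * Vᵀ) = V * Vᵀ := by
      have hsym : (G * (S * A))ᵀ = G * (S * A) := by
        rw [← Matrix.mul_assoc] at h4 ⊢; exact h4
      calc G * (S * A) * (V * Vᵀ)
          = (V * Vᵀ * (G * (S * A)))ᵀ := by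
            rw [Matrix.transpose_mul, hsym, Matrix.transpose_mul,
              Matrix.transpose_transpose]
        _ = V * Vᵀ := by rw [hVVP, Matrix.transpose_mul, Matrix.transpose_transpose]
    have hP2 : G * (S * A) * (V * Vᵀ) = G * (S * A) := by
      rw [hD]
      rw [show G * (D * Vᵀ) * (V * Vᵀ) = G * D * (Vᵀ * V) * Vᵀ by
        simp only [Matrix.mul_assoc]]
      rw [hV, Matrix.mul_one, Matrix.mul_assoc]
    rw [← hP2, hPVV]
end

section
/- Let n ≥ k ≥ 1. For each i ∈ {1,…,k} and t ∈ {k+1,…,n}, let A_{(i,t)} ∈ ℝ^{n×k} be the matrix whose j-th column is e_j for j ≠ i and whose i-th column is e_t. For every subset Z' of the index set {(i,t)}, there exists a matrix S ∈ ℝ^{k×n} (whose first k columns form the identity, and with S(i,t) = 1 iff (i,t) ∈ Z', zero otherwise) such that: if (i,t) ∈ Z' then S·A_{(i,t)} has rank k, and if (i,t) ∉ Z' then S·A_{(i,t)} has rank at most k−1 (its i-th row is zero). -/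
open Matrix

/-- The matrix `A_{(i,t)} ∈ ℝ^{n×k}` whose `j`-th column is `e_j` for `j ≠ i` and
whose `i`-th column is `e_t`. -/
def shatterMat (n k : ℕ) (i : Fin k) (t : Fin n) : Matrix (Fin n) (Fin k) ℝ :=
  Matrix.of fun r j =>
    if j = i then (if r = t then 1 else 0)
    else (if (r : ℕ) = (j : ℕ) then 1 else 0)

/-- Combinatorial core of the Ω(nk) fat-shattering lower bound: for every subset `Z'`
of pairs `(i, t)` with `t ≥ k` (0-indexed, i.e. `t ∈ {k+1,…,n}` 1-indexed), there is a
sketching matrix `S ∈ ℝ^{k×n}` whose first `k` columns form the identity, with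
`S i t = 1` iff `(i,t) ∈ Z'` on the remaining columns, such that `S·A_{(i,t)}` has
rank `k` when `(i,t) ∈ Z'` and rank at most `k−1` otherwise. -/
theorem stmt14 (n k : ℕ) (hk : 1 ≤ k) (hkn : k ≤ n)
    (Z' : Finset (Fin k × Fin n)) :
    ∃ S : Matrix (Fin k) (Fin n) ℝ,
      (∀ (i : Fin k) (j : Fin n), (j : ℕ) < k →
        S i j = if (i : ℕ) = (j : ℕ) then 1 else 0) ∧
      (∀ (i : Fin k) (t : Fin n), k ≤ (t : ℕ) →
        S i t = if (i, t) ∈ Z' then 1 else 0) ∧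
      ∀ (i : Fin k) (t : Fin n), k ≤ (t : ℕ) →
        (((i, t) ∈ Z' → (S * shatterMat n k i t).rank = k) ∧
         ((i, t) ∉ Z' → (S * shatterMat n k i t).rank ≤ k - 1)) := by
  classical
  set S : Matrix (Fin k) (Fin n) ℝ := fun r j =>
    if (j : ℕ) < k then (if (r : ℕ) = (j : ℕ) then 1 else 0)
    else (if (r, j) ∈ Z' then 1 else 0) with hS
  refine ⟨S, ?_, ?_, ?_⟩
  · intro i j hj; simp [hS, hj]
  · intro i t ht; simp [hS, Nat.not_lt.mpr ht]
  · intro i t ht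
    have hM : ∀ r j, (S * shatterMat n k i t) r j
        = if j = i then (if (r, t) ∈ Z' then (1 : ℝ) else 0)
          else (if r = j then 1 else 0) := by
      intro r j
      rw [Matrix.mul_apply]
      by_cases hj : j = i
      · subst hj
        simp only [shatterMat, Matrix.of_apply, if_pos rfl, eq_self_iff_true, ite_true,
          mul_ite, mul_one, mul_zero]
        rw [Finset.sum_ite_eq' Finset.univ t (fun s => S r s)]
        simp [hS, Nat.not_lt.mpr ht]
      · have hcast : ∀ s : Fin n, ((s : ℕ) = (j : ℕ)) ↔ s = Fin.castLE hkn j := by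
          intro s
          constructor
          · intro h; exact Fin.ext (by simpa using h)
          · intro h; subst h; rfl
        simp only [shatterMat, Matrix.of_apply, if_neg hj]
        have : ∀ s : Fin n, S r s * (if (s : ℕ) = (j : ℕ) then (1:ℝ) else 0)
            = if s = Fin.castLE hkn j then S r s else 0 := by
          intro s
          by_cases h : s = Fin.castLE hkn j
          · simp [h, (hcast s).2 h]
          · have : ¬ ((s : ℕ) = (j : ℕ)) := fun hh => h ((hcast s).1 hh)
            simp [h, this]
        rw [Finset.sum_congr rfl (fun s _ => this s)]
        rw [Finset.sum_ite_eq' Finset.univ (Fin.castLE hkn j) (fun s => S r s)]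
        have hjk : ((Fin.castLE hkn j : Fin n) : ℕ) < k := j.isLt
        simp only [Finset.mem_univ, if_pos, hS]
        rw [if_pos hjk]
        simp [Fin.ext_iff]
    by_cases hmem : (i, t) ∈ Z'
    · refine ⟨fun _ => ?_, fun h => absurd hmem h⟩
      have hE : (S * shatterMat n k i t)
          = Matrix.updateCol 1 i (fun r => if (r, t) ∈ Z' then (1 : ℝ) else 0) := by
        ext r j
        rw [hM]
        by_cases hj : j = i <;>
          simp [Matrix.updateCol_apply, hj, Matrix.one_apply]
      have hdet : (S * shatterMat n k i t).det = 1 := by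
        rw [hE]
        have hv : (fun r : Fin k => if (r, t) ∈ Z' then (1 : ℝ) else 0)
            = (fun r => if r = i then (1 : ℝ) else 0)
              + (fun r => if r = i then 0 else if (r, t) ∈ Z' then (1 : ℝ) else 0) := by
          funext r
          by_cases hr : r = i
          · subst hr; simp [hmem]
          · simp [hr]
        rw [hv, Matrix.det_updateCol_add]
        have h1 : Matrix.updateCol (1 : Matrix (Fin k) (Fin k) ℝ) i
            (fun r => if r = i then (1 : ℝ) else 0) = 1 := by
          ext r j
          by_cases hj : j = i <;>
            simp [Matrix.updateCol_apply, hj, Matrix.one_apply]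
        have h2 : (Matrix.updateCol (1 : Matrix (Fin k) (Fin k) ℝ) i
            (fun r => if r = i then 0 else if (r, t) ∈ Z' then (1 : ℝ) else 0)).det = 0 := by
          apply Matrix.det_eq_zero_of_row_eq_zero i
          intro j
          by_cases hj : j = i
          · simp [Matrix.updateCol_apply, hj]
          · have hji : i ≠ j := fun h => hj h.symm
            simp [Matrix.updateCol_apply, hj, Matrix.one_apply, hji]
        rw [h1, h2, Matrix.det_one]; ring
      have hunit : IsUnit (S * shatterMat n k i t) :=
        (Matrix.isUnit_iff_isUnit_det _).2 (by simp [hdet])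
      rw [Matrix.rank_of_isUnit _ hunit]
      simp
    · refine ⟨fun h => absurd h hmem, fun _ => ?_⟩
      have hrow : ∀ j, (S * shatterMat n k i t) i j = 0 := by
        intro j
        rw [hM]
        by_cases hj : j = i
        · simp [hj, hmem]
        · have hji : i ≠ j := fun h => hj h.symm
          simp [hj, hji]
      have hle : LinearMap.range (S * shatterMat n k i t).mulVecLin
          ≤ LinearMap.ker (LinearMap.proj i : (Fin k → ℝ) →ₗ[ℝ] ℝ) := by
        rintro x ⟨y, rfl⟩
        simp [LinearMap.mem_ker, Matrix.mulVecLin_apply, Matrix.mulVec, dotProduct, hrow]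
      have hsurj : LinearMap.range (LinearMap.proj i : (Fin k → ℝ) →ₗ[ℝ] ℝ) = ⊤ := by
        rw [LinearMap.range_eq_top]
        intro c; exact ⟨fun _ => c, rfl⟩
      have hker : Module.finrank ℝ
          (LinearMap.ker (LinearMap.proj i : (Fin k → ℝ) →ₗ[ℝ] ℝ)) = k - 1 := by
        have h := LinearMap.finrank_range_add_finrank_ker
          (LinearMap.proj i : (Fin k → ℝ) →ₗ[ℝ] ℝ)
        rw [hsurj] at h
        simp only [finrank_top, Module.finrank_self, Module.finrank_pi,
          Fintype.card_fin] at h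
        omega
      have : (S * shatterMat n k i t).rank
          ≤ Module.finrank ℝ
            (LinearMap.ker (LinearMap.proj i : (Fin k → ℝ) →ₗ[ℝ] ℝ)) :=
        Submodule.finrank_mono hle
      rw [hker] at this
      exact this
end
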